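/- arXiv:nlin/0412018 — 2 statements merged into one kernel-verified Lean document; each statement's English description precedes it below -/
import Mathlib

section
/- For every integer n ≥ 2 and every i ∈ {0,1,...,n−1}, the function E_{i,1} Poisson-commutes with the momentum p_{n−i}: {E_{i,1}, p_{n−i}} = 0 identically on ℝ^{2n} (equivalently, q^{n−i} is a cyclic coordinate for E_{i,1}). -/
open Matrix

noncomputable section

/-- Phase space ℝ^{2n}: pairs (q, p). -/
abbrev Phase (n : ℕ) := (Fin n → ℝ) × (Fin n → ℝ)

/-- Extended coordinates: `qext n q m` is `q^m` (1-based), with `q^0 := 1`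
and `q^m := 0` for `m < 0` or `m > n`. -/
def qext (n : ℕ) (q : Fin n → ℝ) (m : ℤ) : ℝ :=
  if h : 1 ≤ m ∧ m ≤ (n : ℤ) then q ⟨m.toNat - 1, by omega⟩
  else if m = 0 then 1 else 0

/-- The matrix `L(q)`: first column `-q^j`, superdiagonal `1`, all other entries `0`. -/
def Lmat (n : ℕ) (q : Fin n → ℝ) : Matrix (Fin n) (Fin n) ℝ :=
  Matrix.of fun j k => if (k : ℕ) = 0 then -q j else if (k : ℕ) = (j : ℕ) + 1 then 1 else 0

/-- The contravariant metric `G(q)` with entries `G^{jk} = q^{j+k-n-1}` (1-based indices). -/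
def Gmat (n : ℕ) (q : Fin n → ℝ) : Matrix (Fin n) (Fin n) ℝ :=
  Matrix.of fun j k => qext n q ((j : ℤ) + (k : ℤ) + 1 - (n : ℤ))

/-- The Killing tensors: `K_r = Σ_{k=0}^{r-1} q^k L^{r-1-k}` (so `K_1 = I`). -/
def Kmat (n : ℕ) (q : Fin n → ℝ) (r : ℕ) : Matrix (Fin n) (Fin n) ℝ :=
  ∑ k ∈ Finset.range r, qext n q (k : ℤ) • (Lmat n q) ^ (r - 1 - k)

/-- `E_{i,r}(q,p) = (1/2) Σ_{l,m} (K_r L^i G)^{lm} p_l p_m`. -/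
def Efun (n i r : ℕ) : Phase n → ℝ := fun x =>
  (1 / 2) * ∑ l : Fin n, ∑ m : Fin n,
    (Kmat n x.1 r * (Lmat n x.1) ^ i * Gmat n x.1) l m * x.2 l * x.2 m

/-- Canonical Poisson bracket on `ℝ^{2n}`. -/
def pb (n : ℕ) (f g : Phase n → ℝ) : Phase n → ℝ := fun x =>
  ∑ i : Fin n,
    (fderiv ℝ f x (Pi.single i 1, 0) * fderiv ℝ g x (0, Pi.single i 1)
      - fderiv ℝ f x (0, Pi.single i 1) * fderiv ℝ g x (Pi.single i 1, 0))

/-! Since `K_1 = I`, `E_{i,1} = ½ pᵀ (L^i G) p`, and `L^i G` has a closed form: its `(l, m)` entry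
(0-based) is `q^{l+m+1+i-n}` if `l + i < n` and `m + i < n`, `-q^{l+m+1+i-n}` if `l + i ≥ n` and
`m + i ≥ n`, and `0` otherwise (induction on `i`, multiplying by `L` on the left). The exponent is
`≤ n-i-1` in the first case and `≥ n-i+1` in the second, so `q^{n-i}` never occurs: `E_{i,1}` is
invariant under translations in `q^{n-i}`, and `{E_{i,1}, p_{n-i}}` is exactly the derivative
in that direction. -/

lemma fderiv_apply_eq_zero_of_forall_add_smul_eq {𝕜 E F : Type*} [NontriviallyNormedField 𝕜]
    [NormedAddCommGroup E] [NormedSpace 𝕜 E] [NormedAddCommGroup F] [NormedSpace 𝕜 F]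
    {f : E → F} {x v : E} (h : ∀ t : 𝕜, f (x + t • v) = f x) : fderiv 𝕜 f x v = 0 := by
  by_cases hf : DifferentiableAt 𝕜 f x
  · rw [← hf.lineDeriv_eq_fderiv, lineDeriv, funext h, deriv_const]
  · simp [fderiv_zero_of_not_differentiableAt hf]

lemma pb_momentum_eq_fderiv (n : ℕ) (f : Phase n → ℝ) (j : Fin n) (x : Phase n) :
    pb n f (fun y => y.2 j) x = fderiv ℝ f x (Pi.single j 1, 0) := by
  have hp : ∀ v : Phase n, fderiv ℝ (fun y : Phase n => y.2 j) x v = v.2 j := fun v => by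
    change fderiv ℝ ((ContinuousLinearMap.proj j).comp
      (ContinuousLinearMap.snd ℝ (Fin n → ℝ) (Fin n → ℝ))) x v = _
    rw [ContinuousLinearMap.fderiv]
    rfl
  simp [pb, hp, Pi.single_apply]

section qext

variable {n : ℕ} (q : Fin n → ℝ)

lemma qext_zero : qext n q 0 = 1 := by simp [qext]

lemma qext_of_neg {a : ℤ} (ha : a < 0) : qext n q a = 0 := by
  rw [qext, dif_neg (by omega), if_neg ha.ne]

lemma qext_of_gt {a : ℤ} (ha : (n : ℤ) < a) : qext n q a = 0 := by
  rw [qext, dif_neg (by omega), if_neg (by omega)]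

lemma qext_coe_add_one (l : Fin n) : qext n q ((l : ℤ) + 1) = q l := by
  rw [qext, dif_pos (by omega)]
  congr

lemma qext_update_of_ne (j : Fin n) (c : ℝ) {a : ℤ} (ha : a ≠ (j : ℤ) + 1) :
    qext n (Function.update q j c) a = qext n q a := by
  unfold qext
  split_ifs
  · exact Function.update_of_ne (fun h => ha (by subst h; simp; omega)) _ _
  all_goals rfl

end qext

/-- Closed form of `(L^i G)^{lm}` in 0-based indices, read at natural-number indices so that
row `n` makes sense: there it vanishes, which absorbs the boundary case of `L * M`. -/
def lPowGEntry (n : ℕ) (q : Fin n → ℝ) (i l m : ℕ) : ℝ :=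
  if l + i < n ∧ m + i < n then qext n q ((l : ℤ) + m + 1 + i - n)
  else if n ≤ l + i ∧ n ≤ m + i then -qext n q ((l : ℤ) + m + 1 + i - n)
  else 0

lemma Lmat_mul_apply_of_eq {n : ℕ} (q : Fin n → ℝ) {M : Matrix (Fin n) (Fin n) ℝ}
    {f : ℕ → ℕ → ℝ} (hM : ∀ a b : Fin n, M a b = f a b) (hf : ∀ b, f n b = 0) (l m : Fin n) :
    (Lmat n q * M) l m = -q l * f 0 m + f (l + 1) m := by
  have hsummand : ∀ t : ℕ, (if t = 0 then -q l else if t = (l : ℕ) + 1 then 1 else 0) * f t m =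
      (if t = 0 then -q l * f 0 m else 0) + (if t = (l : ℕ) + 1 then f ((l : ℕ) + 1) m else 0) := by
    intro t
    split_ifs <;> first | omega | simp_all
  simp only [mul_apply, hM, Lmat, of_apply]
  rw [Fin.sum_univ_eq_sum_range (fun t => (if t = 0 then -q l else
    if t = (l : ℕ) + 1 then 1 else 0) * f t m) n]
  simp only [hsummand, Finset.sum_add_distrib, Finset.sum_ite_eq', Finset.mem_range]
  rw [if_pos l.pos]
  split_ifs with hl
  · rfl
  · rw [show (l : ℕ) + 1 = n by omega, hf]

section lPowGEntry

variable {n : ℕ} (q : Fin n → ℝ)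

lemma lPowGEntry_row_n (i m : ℕ) : lPowGEntry n q i n m = 0 := by
  rw [lPowGEntry, if_neg (by omega)]
  split_ifs
  · rw [qext_of_gt q (by omega), neg_zero]
  · rfl

lemma lPowGEntry_zero (l m : Fin n) : lPowGEntry n q 0 l m = Gmat n q l m := by
  rw [lPowGEntry, if_pos (by omega), Gmat, of_apply]
  push_cast
  ring_nf

lemma lPowGEntry_row_zero {i : ℕ} (hi : i < n) (m : ℕ) :
    lPowGEntry n q i 0 m = if m + i + 1 = n then 1 else 0 := by
  rw [lPowGEntry, if_neg (c := n ≤ 0 + i ∧ n ≤ m + i) (by omega)]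
  by_cases hm : m + i < n
  · rw [if_pos ⟨by omega, hm⟩]
    split_ifs
    · rw [← qext_zero q]
      congr 1
      omega
    · exact qext_of_neg q (by omega)
  · rw [if_neg (by omega), if_neg (by omega)]

lemma lPowGEntry_succ {i : ℕ} (hi : i < n) (l m : Fin n) :
    lPowGEntry n q (i + 1) l m = -q l * lPowGEntry n q i 0 m + lPowGEntry n q i (l + 1) m := by
  rw [lPowGEntry_row_zero q hi, ← qext_coe_add_one q l]
  unfold lPowGEntry
  split_ifs <;> grind

end lPowGEntry

lemma lPowGEntry_update {n i : ℕ} (q : Fin n → ℝ) {j : Fin n} (hj : (j : ℕ) + i + 1 = n) (c : ℝ)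
    (l m : ℕ) : lPowGEntry n (Function.update q j c) i l m = lPowGEntry n q i l m := by
  unfold lPowGEntry
  split_ifs
  · rw [qext_update_of_ne q j c (by omega)]
  · rw [qext_update_of_ne q j c (by omega)]
  · rfl

lemma Lmat_pow_mul_Gmat_apply {n i : ℕ} (hi : i < n) (q : Fin n → ℝ) (l m : Fin n) :
    (Lmat n q ^ i * Gmat n q) l m = lPowGEntry n q i l m := by
  induction i generalizing l m with
  | zero => rw [pow_zero, one_mul, lPowGEntry_zero]
  | succ i ih =>
    rw [pow_succ', mul_assoc, Lmat_mul_apply_of_eq q (ih (by omega)) (lPowGEntry_row_n q i),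
      lPowGEntry_succ q (by omega)]

lemma Efun_one_eq {n i : ℕ} (hi : i < n) (x : Phase n) :
    Efun n i 1 x = 1 / 2 * ∑ l : Fin n, ∑ m : Fin n, lPowGEntry n x.1 i l m * x.2 l * x.2 m := by
  simp [Efun, Kmat, qext_zero, Lmat_pow_mul_Gmat_apply hi]

lemma Efun_one_add_smul_single {n i : ℕ} (hi : i < n) {j : Fin n} (hj : (j : ℕ) + i + 1 = n)
    (x : Phase n) (t : ℝ) : Efun n i 1 (x + t • (Pi.single j 1, 0)) = Efun n i 1 x := by
  have hq : x.1 + t • Pi.single j 1 = Function.update x.1 j (x.1 j + t) := by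
    ext k
    by_cases hk : k = j <;> simp [hk]
  simp only [Efun_one_eq hi, Prod.fst_add, Prod.snd_add, Prod.smul_fst, Prod.smul_snd,
    smul_zero, add_zero, hq, lPowGEntry_update _ hj]

-- `p_{n−i}` in 1-based indexing is the coordinate with 0-based index `n−i−1`.
/-- for `i ∈ {0,…,n−1}`, `{E_{i,1}, p_{n−i}} = 0` identically on `ℝ^{2n}`
(`p_{n−i}` is 1-based, i.e. the coordinate with 0-based index `n−i−1`). -/
theorem Efun_pb_momentum (n : ℕ) (i : ℕ) (hi : i < n) (x : Phase n) :
    pb n (Efun n i 1) (fun y => y.2 ⟨n - i - 1, by omega⟩) x = 0 := by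
  rw [pb_momentum_eq_fderiv]
  exact fderiv_apply_eq_zero_of_forall_add_smul_eq
    (Efun_one_add_smul_single hi (show n - i - 1 + i + 1 = n by omega) x)
end
end

section
/- For every integer n ≥ 2 and every i ∈ {2,3,...,n+1}, the function E_{i,1} Poisson-commutes with the function q^n p_{n−i+2}: {E_{i,1}, q^n p_{n−i+2}} = 0 identically on ℝ^{2n}. -/
open Matrix

noncomputable section
set_option maxHeartbeats 1000000

/-- closed form for the entries of `L^i * G`. -/
def Fent (n i : ℕ) (l m : Fin n) (q : Fin n → ℝ) : ℝ :=
  (if ((l:ℕ):ℤ)+1 ≤ (n:ℤ)-(i:ℤ) ∧ ((m:ℕ):ℤ)+1 ≤ (n:ℤ)-(i:ℤ) then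
      qext n q (((l:ℕ):ℤ)+((m:ℕ):ℤ)+(i:ℤ)+1-(n:ℤ))
   else if (n:ℤ)-(i:ℤ) < ((l:ℕ):ℤ)+1 ∧ (n:ℤ)-(i:ℤ) < ((m:ℕ):ℤ)+1 then
      -qext n q (((l:ℕ):ℤ)+((m:ℕ):ℤ)+(i:ℤ)+1-(n:ℤ))
   else 0)
  + (if i = n+1 then qext n q (((l:ℕ):ℤ)+1) * qext n q (((m:ℕ):ℤ)+1) else 0)

lemma qext_eq_zero {n : ℕ} {q : Fin n → ℝ} {t : ℤ} (h : t < 0 ∨ (n:ℤ) < t) :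
    qext n q t = 0 := by
  unfold qext; split_ifs <;> first | rfl | omega

lemma qext_eq_one {n : ℕ} {q : Fin n → ℝ} {t : ℤ} (h : t = 0) :
    qext n q t = 1 := by
  unfold qext; split_ifs <;> first | rfl | omega

lemma qval {n : ℕ} (q : Fin n → ℝ) (l : Fin n) : q l = qext n q (((l:ℕ):ℤ)+1) := by
  unfold qext
  rw [dif_pos ⟨by omega, by omega⟩]
  congr 1

lemma sum_ite_val {n : ℕ} (c : ℕ) (f : Fin n → ℝ) :
    (∑ k : Fin n, if (k:ℕ) = c then f k else 0) = if h : c < n then f ⟨c, h⟩ else 0 := by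
  split_ifs with h
  · rw [Finset.sum_eq_single ⟨c, h⟩]
    · simp
    · intro k _ hk
      rw [if_neg]
      exact fun hc => hk (Fin.ext hc)
    · intro hk; exact absurd (Finset.mem_univ _) hk
  · apply Finset.sum_eq_zero
    intro k _
    rw [if_neg]
    omega

lemma Lmul_row {n : ℕ} (hn : 0 < n) (q : Fin n → ℝ) (M : Matrix (Fin n) (Fin n) ℝ)
    (l m : Fin n) :
    (Lmat n q * M) l m
      = -q l * M ⟨0, hn⟩ m + (if h : (l:ℕ)+1 < n then M ⟨(l:ℕ)+1, h⟩ m else 0) := by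
  rw [Matrix.mul_apply]
  have key : ∀ k : Fin n, Lmat n q l k * M k m =
      (if (k:ℕ) = 0 then -q l * M k m else 0) + (if (k:ℕ) = (l:ℕ)+1 then M k m else 0) := by
    intro k
    simp only [Lmat, Matrix.of_apply]
    split_ifs <;> first | ring1 | (exfalso; omega)
  rw [Finset.sum_congr rfl (fun k _ => key k), Finset.sum_add_distrib,
    sum_ite_val 0 (fun k => -q l * M k m), sum_ite_val ((l:ℕ)+1) (fun k => M k m),
    dif_pos hn]

lemma Fent_base {n : ℕ} (q : Fin n → ℝ) (l m : Fin n) :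
    Gmat n q l m = Fent n 0 l m q := by
  have hl := l.isLt; have hm := m.isLt
  simp only [Fent, Gmat, Matrix.of_apply, Nat.cast_zero]
  rw [if_pos (⟨by omega, by omega⟩ : (((l:ℕ):ℤ)+1 ≤ (n:ℤ)-(0:ℤ)) ∧ (((m:ℕ):ℤ)+1 ≤ (n:ℤ)-(0:ℤ))),
    if_neg (by omega : ¬(0 = n+1))]
  norm_num

lemma Fent_step {n : ℕ} (hn : 0 < n) {i : ℕ} (hi : i ≤ n) (q : Fin n → ℝ) (l m : Fin n) :
    Fent n (i+1) l m q
      = -q l * Fent n i ⟨0, hn⟩ m q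
        + (if h : (l:ℕ)+1 < n then Fent n i ⟨(l:ℕ)+1, h⟩ m q else 0) := by
  have hl := l.isLt; have hm := m.isLt
  rw [qval q l]
  simp only [Fent, Fin.val_mk]
  push_cast
  split_ifs
  all_goals try (exfalso; first | assumption | omega)
  all_goals try ring1
  all_goals try (simp (disch := omega) only [qext_eq_zero, qext_eq_one]; ring1)
  all_goals try (subst_vars; ring_nf; done)
  all_goals try (subst_vars; ring_nf; simp (disch := omega) only [qext_eq_zero, qext_eq_one]; ring1)
  all_goals try (ring_nf; done)
  all_goals simp (disch := omega) only [qext_eq_zero, qext_eq_one]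
  all_goals try (rw [show (((l:ℕ):ℤ) + ((m:ℕ):ℤ) + (((i:ℕ):ℤ) + 1) + 1 - ((n:ℕ):ℤ)) = ((l:ℕ):ℤ)+1 from by omega]; ring1)
  all_goals (rw [show (((l:ℕ):ℤ) + 1 + ((m:ℕ):ℤ) + ((i:ℕ):ℤ) + 1 - ((n:ℕ):ℤ)) = ((l:ℕ):ℤ)+1 from by omega]; ring1)

lemma LpowG {n : ℕ} (hn : 0 < n) (q : Fin n → ℝ) :
    ∀ i, i ≤ n+1 → ∀ l m : Fin n, ((Lmat n q)^i * Gmat n q) l m = Fent n i l m q := by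
  intro i
  induction i with
  | zero => intro _ l m; rw [pow_zero, Matrix.one_mul]; exact Fent_base q l m
  | succ i ih =>
    intro hi l m
    rw [pow_succ', Matrix.mul_assoc, Lmul_row hn q _ l m]
    simp only [ih (by omega)]
    exact (Fent_step hn (by omega) q l m).symm

lemma Kmat_one {n : ℕ} (q : Fin n → ℝ) : Kmat n q 1 = 1 := by
  simp [Kmat, qext]

lemma Fent_symm {n i : ℕ} (q : Fin n → ℝ) (l m : Fin n) :
    Fent n i l m q = Fent n i m l q := by
  have e : ((l:ℕ):ℤ)+((m:ℕ):ℤ) = ((m:ℕ):ℤ)+((l:ℕ):ℤ) := by omega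
  simp only [Fent]
  split_ifs <;> first | (exfalso; omega) | ring1 | ((rw [e]) <;> ring1)

def dqext (n : ℕ) (t : ℤ) : (Fin n → ℝ) →L[ℝ] ℝ :=
  if h : 1 ≤ t ∧ t ≤ (n:ℤ) then ContinuousLinearMap.proj ⟨t.toNat - 1, by omega⟩ else 0

lemma hasFDerivAt_qext {n : ℕ} (t : ℤ) (q : Fin n → ℝ) :
    HasFDerivAt (fun q : Fin n → ℝ => qext n q t) (dqext n t) q := by
  by_cases h : 1 ≤ t ∧ t ≤ (n:ℤ)
  · have e : (fun q : Fin n → ℝ => qext n q t)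
        = fun q : Fin n → ℝ => q ⟨t.toNat - 1, by omega⟩ := by
      funext q; simp only [qext, dif_pos h]
    rw [e]
    unfold dqext
    rw [dif_pos h]
    exact (ContinuousLinearMap.proj (R := ℝ) (φ := fun _ : Fin n => ℝ)
      ⟨t.toNat - 1, by omega⟩).hasFDerivAt
  · have e : (fun q : Fin n → ℝ => qext n q t) = fun _ => if t = 0 then (1:ℝ) else 0 := by
      funext q; simp only [qext, dif_neg h]
    rw [e]
    unfold dqext
    rw [dif_neg h]
    exact hasFDerivAt_const _ _

lemma dqext_single {n : ℕ} (t : ℤ) (s : Fin n) :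
    (dqext n t) (Pi.single s 1) = if ((s:ℕ):ℤ)+1 = t then 1 else 0 := by
  have hs := s.isLt
  unfold dqext
  split_ifs with h h2 h3
  · rw [ContinuousLinearMap.proj_apply, Pi.single_apply, if_pos (by apply Fin.ext; simp only [Fin.val_mk]; omega)]
  · rw [ContinuousLinearMap.proj_apply, Pi.single_apply, if_neg]
    intro he
    have := congrArg Fin.val he
    simp only [Fin.val_mk] at this
    omega
  · exfalso; omega
  · simp

def dFent (n i : ℕ) (l m : Fin n) (q : Fin n → ℝ) : (Fin n → ℝ) →L[ℝ] ℝ :=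
  (if ((l:ℕ):ℤ)+1 ≤ (n:ℤ)-(i:ℤ) ∧ ((m:ℕ):ℤ)+1 ≤ (n:ℤ)-(i:ℤ) then
      dqext n (((l:ℕ):ℤ)+((m:ℕ):ℤ)+(i:ℤ)+1-(n:ℤ))
   else if (n:ℤ)-(i:ℤ) < ((l:ℕ):ℤ)+1 ∧ (n:ℤ)-(i:ℤ) < ((m:ℕ):ℤ)+1 then
      -dqext n (((l:ℕ):ℤ)+((m:ℕ):ℤ)+(i:ℤ)+1-(n:ℤ))
   else 0)
  + (if i = n+1 then
      qext n q (((l:ℕ):ℤ)+1) • dqext n (((m:ℕ):ℤ)+1)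
        + qext n q (((m:ℕ):ℤ)+1) • dqext n (((l:ℕ):ℤ)+1)
     else 0)

lemma hasFDerivAt_Fent {n i : ℕ} (l m : Fin n) (q : Fin n → ℝ) :
    HasFDerivAt (fun q => Fent n i l m q) (dFent n i l m q) q := by
  unfold Fent dFent
  apply HasFDerivAt.add
  · by_cases h1 : ((l:ℕ):ℤ)+1 ≤ (n:ℤ)-(i:ℤ) ∧ ((m:ℕ):ℤ)+1 ≤ (n:ℤ)-(i:ℤ)
    · simp only [if_pos h1]; exact hasFDerivAt_qext _ q
    · by_cases h2 : (n:ℤ)-(i:ℤ) < ((l:ℕ):ℤ)+1 ∧ (n:ℤ)-(i:ℤ) < ((m:ℕ):ℤ)+1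
      · simp only [if_neg h1, if_pos h2]; exact (hasFDerivAt_qext _ q).neg
      · simp only [if_neg h1, if_neg h2]; exact hasFDerivAt_const _ _
  · by_cases h3 : i = n+1
    · simp only [if_pos h3]
      exact (hasFDerivAt_qext _ q).mul (hasFDerivAt_qext _ q)
    · simp only [if_neg h3]; exact hasFDerivAt_const _ _

def Eexp (n i : ℕ) : Phase n → ℝ := fun x =>
  (1 / 2) * ∑ l : Fin n, ∑ m : Fin n, Fent n i l m x.1 * (x.2 l * x.2 m)

lemma Efun_eq {n : ℕ} (hn : 0 < n) {i : ℕ} (hi : i ≤ n+1) : Efun n i 1 = Eexp n i := by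
  funext x
  unfold Efun Eexp
  congr 1
  apply Finset.sum_congr rfl
  intro l _
  apply Finset.sum_congr rfl
  intro m _
  rw [Kmat_one, Matrix.one_mul, LpowG hn x.1 i hi l m, mul_assoc]

def DE (n i : ℕ) (x : Phase n) : Phase n →L[ℝ] ℝ :=
  (1/2 : ℝ) • ∑ l : Fin n, ∑ m : Fin n,
    (Fent n i l m x.1 •
        (x.2 l • (ContinuousLinearMap.proj m).comp (ContinuousLinearMap.snd ℝ (Fin n → ℝ) (Fin n → ℝ))
          + x.2 m • (ContinuousLinearMap.proj l).comp (ContinuousLinearMap.snd ℝ (Fin n → ℝ) (Fin n → ℝ)))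
      + (x.2 l * x.2 m) • (dFent n i l m x.1).comp (ContinuousLinearMap.fst ℝ (Fin n → ℝ) (Fin n → ℝ)))

lemma hasFDerivAt_Eexp {n i : ℕ} (x : Phase n) : HasFDerivAt (Eexp n i) (DE n i x) x := by
  unfold Eexp DE
  rw [show (1/2 : ℝ) = ((1:ℝ)/2 : ℝ) from rfl]
  apply HasFDerivAt.const_mul
  apply HasFDerivAt.fun_sum
  intro l _
  apply HasFDerivAt.fun_sum
  intro m _
  exact ((hasFDerivAt_Fent l m x.1).comp x (hasFDerivAt_fst)).mul
    ((((ContinuousLinearMap.proj (R := ℝ) (φ := fun _ : Fin n => ℝ) l).comp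
        (ContinuousLinearMap.snd ℝ (Fin n → ℝ) (Fin n → ℝ))).hasFDerivAt).mul
      (((ContinuousLinearMap.proj (R := ℝ) (φ := fun _ : Fin n => ℝ) m).comp
        (ContinuousLinearMap.snd ℝ (Fin n → ℝ) (Fin n → ℝ))).hasFDerivAt))

lemma DE_app_q {n i : ℕ} (x : Phase n) (s : Fin n) :
    DE n i x (Pi.single s 1, (0 : Fin n → ℝ))
      = (1/2) * ∑ l : Fin n, ∑ m : Fin n,
          (x.2 l * x.2 m) * (dFent n i l m x.1 (Pi.single s 1)) := by
  unfold DE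
  simp only [ContinuousLinearMap.smul_apply, ContinuousLinearMap.coe_sum', Finset.sum_apply,
    ContinuousLinearMap.add_apply, ContinuousLinearMap.comp_apply,
    ContinuousLinearMap.coe_fst', ContinuousLinearMap.coe_snd',
    ContinuousLinearMap.proj_apply, smul_eq_mul, Pi.zero_apply, mul_zero, add_zero, zero_add,
    zero_mul]

lemma DE_app_p {n i : ℕ} (x : Phase n) (s : Fin n) :
    DE n i x ((0 : Fin n → ℝ), Pi.single s 1)
      = (1/2) * ∑ l : Fin n, ∑ m : Fin n,
          Fent n i l m x.1 * (x.2 l * (if m = s then 1 else 0) + x.2 m * (if l = s then 1 else 0)) := by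
  unfold DE
  simp only [ContinuousLinearMap.smul_apply, ContinuousLinearMap.coe_sum', Finset.sum_apply,
    ContinuousLinearMap.add_apply, ContinuousLinearMap.comp_apply,
    ContinuousLinearMap.coe_fst', ContinuousLinearMap.coe_snd',
    ContinuousLinearMap.proj_apply, smul_eq_mul, Pi.zero_apply, map_zero, mul_zero, add_zero,
    zero_add, zero_mul, Pi.single_apply]

lemma star_id {n i : ℕ} (hn : 2 ≤ n) (hi2 : 2 ≤ i) (hin : i < n+2) (q : Fin n → ℝ)
    (l m : Fin n) :
    q ⟨n-1, by omega⟩ * (dFent n i l m q (Pi.single (⟨n+1-i, by omega⟩ : Fin n) 1))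
      = (if l = (⟨n+1-i, by omega⟩ : Fin n) then Fent n i ⟨n-1, by omega⟩ m q else 0)
        + (if m = (⟨n+1-i, by omega⟩ : Fin n) then Fent n i ⟨n-1, by omega⟩ l q else 0) := by
  have hl := l.isLt; have hm := m.isLt
  rw [qval q ⟨n-1, by omega⟩]
  unfold dFent Fent
  simp only [ContinuousLinearMap.add_apply,
    apply_ite (fun f : (Fin n → ℝ) →L[ℝ] ℝ => f (Pi.single (⟨n+1-i, by omega⟩ : Fin n) 1)),
    ContinuousLinearMap.neg_apply, ContinuousLinearMap.zero_apply,
    ContinuousLinearMap.smul_apply, dqext_single, smul_eq_mul, Fin.val_mk, Fin.ext_iff]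
  push_cast
  split_ifs
  all_goals try (exfalso; first | assumption | omega)
  all_goals try ring1
  all_goals try (simp (disch := omega) only [qext_eq_zero, qext_eq_one]; ring1)
  all_goals try (subst_vars; ring_nf; done)
  all_goals try (subst_vars; ring_nf; simp (disch := omega) only [qext_eq_zero, qext_eq_one]; ring1)
  all_goals try (ring_nf; done)
  all_goals try (rw [show (((n-1 : ℕ) : ℤ) + ((m:ℕ):ℤ) + ((i:ℕ):ℤ) + 1 - ((n:ℕ):ℤ))
    = ((n-1 : ℕ) : ℤ) + 1 from by omega]; ring1)
  all_goals (rw [show (((n-1 : ℕ) : ℤ) + ((l:ℕ):ℤ) + ((i:ℕ):ℤ) + 1 - ((n:ℕ):ℤ))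
    = ((n-1 : ℕ) : ℤ) + 1 from by omega]; ring1)

/-- for `i ∈ {2,…,n+1}`, `{E_{i,1}, q^n p_{n−i+2}} = 0` identically on
`ℝ^{2n}` (in 0-based indices, `q^n` is `q ⟨n−1⟩` and `p_{n−i+2}` is `p ⟨n+1−i⟩`). -/
theorem Efun_pb_qnp (n : ℕ) (hn : 2 ≤ n) (i : ℕ) (hi2 : 2 ≤ i) (hin : i ≤ n + 1)
    (x : Phase n) :
    pb n (Efun n i 1)
      (fun y => y.1 ⟨n - 1, by omega⟩ * y.2 ⟨n + 1 - i, by omega⟩) x = 0 := by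
  have hn0 : 0 < n := by omega
  have hf : fderiv ℝ (Efun n i 1) x = DE n i x := by
    rw [Efun_eq hn0 (by omega : i ≤ n+1)]
    exact (hasFDerivAt_Eexp x).fderiv
  have hg : HasFDerivAt
      (fun y : Phase n => y.1 ⟨n - 1, by omega⟩ * y.2 ⟨n + 1 - i, by omega⟩)
      (x.1 ⟨n - 1, by omega⟩ •
          (ContinuousLinearMap.proj (R := ℝ) (φ := fun _ : Fin n => ℝ)
            (⟨n + 1 - i, by omega⟩ : Fin n)).comp
            (ContinuousLinearMap.snd ℝ (Fin n → ℝ) (Fin n → ℝ))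
        + x.2 ⟨n + 1 - i, by omega⟩ •
          (ContinuousLinearMap.proj (R := ℝ) (φ := fun _ : Fin n => ℝ)
            (⟨n - 1, by omega⟩ : Fin n)).comp
            (ContinuousLinearMap.fst ℝ (Fin n → ℝ) (Fin n → ℝ))) x :=
    (((ContinuousLinearMap.proj (R := ℝ) (φ := fun _ : Fin n => ℝ)
        (⟨n - 1, by omega⟩ : Fin n)).comp
        (ContinuousLinearMap.fst ℝ (Fin n → ℝ) (Fin n → ℝ))).hasFDerivAt).mul
      (((ContinuousLinearMap.proj (R := ℝ) (φ := fun _ : Fin n => ℝ)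
        (⟨n + 1 - i, by omega⟩ : Fin n)).comp
        (ContinuousLinearMap.snd ℝ (Fin n → ℝ) (Fin n → ℝ))).hasFDerivAt)
  unfold pb
  simp only [hf, hg.fderiv]
  simp only [ContinuousLinearMap.add_apply, ContinuousLinearMap.smul_apply,
    ContinuousLinearMap.comp_apply, ContinuousLinearMap.coe_fst', ContinuousLinearMap.coe_snd',
    ContinuousLinearMap.proj_apply, smul_eq_mul, Pi.zero_apply, mul_zero, zero_mul, add_zero,
    zero_add, Pi.single_apply, DE_app_q, DE_app_p]
  simp only [mul_ite, ite_mul, mul_one, mul_zero, zero_mul, one_mul, Finset.sum_sub_distrib,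
    Finset.sum_ite_eq, Finset.sum_ite_eq', Finset.mem_univ, if_true]
  rw [sub_eq_zero]
  have pull : ∀ (c : Prop) [Decidable c] (f : Fin n → ℝ),
      (∑ m : Fin n, if c then f m else 0) = if c then ∑ m : Fin n, f m else 0 := by
    intro c inst f
    split_ifs <;> simp
  have key : ∀ l m : Fin n,
      x.2 l * x.2 m * (dFent n i l m x.1) (Pi.single (⟨n + 1 - i, by omega⟩ : Fin n) 1)
          * x.1 ⟨n - 1, by omega⟩
        = (if l = (⟨n + 1 - i, by omega⟩ : Fin n) then
              Fent n i ⟨n - 1, by omega⟩ m x.1 * (x.2 l * x.2 m) else 0)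
          + (if m = (⟨n + 1 - i, by omega⟩ : Fin n) then
              Fent n i ⟨n - 1, by omega⟩ l x.1 * (x.2 l * x.2 m) else 0) := by
    intro l m
    have h := star_id hn hi2 (by omega) x.1 l m
    calc x.2 l * x.2 m * (dFent n i l m x.1) (Pi.single (⟨n + 1 - i, by omega⟩ : Fin n) 1)
          * x.1 ⟨n - 1, by omega⟩
        = x.1 ⟨n - 1, by omega⟩ * (dFent n i l m x.1) (Pi.single (⟨n + 1 - i, by omega⟩ : Fin n) 1)
            * (x.2 l * x.2 m) := by ring
      _ = _ := by rw [h]; split_ifs <;> ring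
  have key2 : ∀ l m : Fin n,
      Fent n i l m x.1 * ((if m = (⟨n - 1, by omega⟩ : Fin n) then x.2 l else 0)
          + (if l = (⟨n - 1, by omega⟩ : Fin n) then x.2 m else 0)) * x.2 ⟨n + 1 - i, by omega⟩
        = (if m = (⟨n - 1, by omega⟩ : Fin n) then
              Fent n i l m x.1 * (x.2 l * x.2 ⟨n + 1 - i, by omega⟩) else 0)
          + (if l = (⟨n - 1, by omega⟩ : Fin n) then
              Fent n i l m x.1 * (x.2 m * x.2 ⟨n + 1 - i, by omega⟩) else 0) := by
    intro l m
    split_ifs <;> ring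
  have hL : (1 / 2 * ∑ l : Fin n, ∑ m : Fin n,
        x.2 l * x.2 m * (dFent n i l m x.1) (Pi.single (⟨n + 1 - i, by omega⟩ : Fin n) 1))
          * x.1 ⟨n - 1, by omega⟩
      = ∑ j : Fin n, Fent n i ⟨n - 1, by omega⟩ j x.1 * x.2 j * x.2 ⟨n + 1 - i, by omega⟩ := by
    rw [mul_assoc]
    simp only [Finset.sum_mul]
    simp only [key]
    simp only [Finset.sum_add_distrib, pull, Finset.sum_ite_eq', Finset.mem_univ, if_true]
    rw [← Finset.sum_add_distrib, Finset.mul_sum]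
    exact Finset.sum_congr rfl fun j _ => by ring
  have hR : (1 / 2 * ∑ l : Fin n, ∑ m : Fin n,
        Fent n i l m x.1 * ((if m = (⟨n - 1, by omega⟩ : Fin n) then x.2 l else 0)
          + (if l = (⟨n - 1, by omega⟩ : Fin n) then x.2 m else 0))) * x.2 ⟨n + 1 - i, by omega⟩
      = ∑ j : Fin n, Fent n i ⟨n - 1, by omega⟩ j x.1 * x.2 j * x.2 ⟨n + 1 - i, by omega⟩ := by
    rw [mul_assoc]
    simp only [Finset.sum_mul]
    simp only [key2]
    simp only [Finset.sum_add_distrib, pull, Finset.sum_ite_eq', Finset.mem_univ, if_true]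
    rw [← Finset.sum_add_distrib, Finset.mul_sum]
    refine Finset.sum_congr rfl fun j _ => ?_
    rw [Fent_symm x.1 j ⟨n - 1, by omega⟩]
    ring
  rw [hL, hR]
end
end
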